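/- arXiv:math/9908057 — 4 statements merged into one kernel-verified Lean document; each statement's English description precedes it below -/
import Mathlib

section
/- For 0 ≤ r ≤ 1/3 and all real x, R̃'(x) = (1 − 4r·cos x + 3r²)/((cos x − r)² + sin² x) ≥ 0, with equality only when r = 1/3 and cos x = 1. Consequently R̃ is monotone nondecreasing on ℝ. -/
/-!
Since `e^{ix} - r = e^{ix} (1 - r e^{-ix})` and `1 - r e^{-ix}` has positive real part for
`|r| < 1`, the function `θ x = x + arctan (r sin x / (1 - r cos x))` is a smooth argument of
`e^{ix} - r`, and it is nondecreasing. The principal argument differs from `θ` by `2π` times an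
integer that only jumps when `θ` crosses `π` modulo `2π`, so
`R̃ x = (x - 2 arctan (…) + Ω) + 4π ⌈(θ x - π) / 2π⌉`. The second summand is a nondecreasing step
function; the derivative of the first is the quotient of the statement, which is nonnegative since
`1 - 4 r cos x + 3 r² = (1 - r)(1 - 3r) + 4r (1 - cos x)`.
-/

open Real

/-- The incident angle function of the off-center reflection. -/
noncomputable def iota (r x : ℝ) : ℝ :=
  Complex.arg ((Real.cos x - r : ℝ) + (Real.sin x : ℝ) * Complex.I) - x

/-- Lift of the off-center reflection taking 0 to Ω. -/
noncomputable def Rt (r Ω x : ℝ) : ℝ := x + Ω - 2 * iota r x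

section OffCenter

variable {r : ℝ}

lemma mul_cos_le_abs (r x : ℝ) : r * cos x ≤ |r| :=
  calc r * cos x ≤ |r * cos x| := le_abs_self _
    _ = |r| * |cos x| := abs_mul ..
    _ ≤ |r| := mul_le_of_le_one_right (abs_nonneg _) (abs_cos_le_one x)

lemma one_sub_mul_cos_pos (hr : |r| < 1) (x : ℝ) : 0 < 1 - r * cos x := by
  linarith [mul_cos_le_abs r x]

/-- `|e^{ix} - r| = |1 - r e^{-ix}|`. -/
lemma cos_sub_sq_add_sin_sq (r x : ℝ) :
    (cos x - r) ^ 2 + sin x ^ 2 = (1 - r * cos x) ^ 2 + (r * sin x) ^ 2 := by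
  linear_combination (1 - r ^ 2) * sin_sq_add_cos_sq x

lemma cos_sub_sq_add_sin_sq_pos (hr : |r| < 1) (x : ℝ) :
    0 < (cos x - r) ^ 2 + sin x ^ 2 := by
  rw [cos_sub_sq_add_sin_sq]
  have := one_sub_mul_cos_pos hr x
  positivity

/-- The principal argument of `1 - r e^{-ix}`, whose real part is positive when `|r| < 1`;
thus `x + phase r x` is a continuous argument of `e^{ix} - r`. -/
noncomputable def phase (r x : ℝ) : ℝ := arctan (r * sin x / (1 - r * cos x))

lemma hasDerivAt_phase (hr : |r| < 1) (x : ℝ) :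
    HasDerivAt (phase r) ((r * cos x - r ^ 2) / ((cos x - r) ^ 2 + sin x ^ 2)) x := by
  have hu := (one_sub_mul_cos_pos hr x).ne'
  have hquot := ((hasDerivAt_sin x).const_mul r).div
    (((hasDerivAt_cos x).const_mul r).const_sub 1) hu
  refine hquot.arctan.congr_deriv ?_
  simp only [Pi.div_apply]
  rw [cos_sub_sq_add_sin_sq]
  field_simp
  linear_combination -(r ^ 2) * sin_sq_add_cos_sq x

lemma monotone_add_phase (hr : |r| < 1) : Monotone fun x => x + phase r x := by
  refine monotone_of_hasDerivAt_nonneg (fun x => (hasDerivAt_id' x).add (hasDerivAt_phase hr x))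
    fun x => ?_
  have hden := cos_sub_sq_add_sin_sq_pos hr x
  rw [Pi.zero_apply, one_add_div hden.ne']
  refine div_nonneg ?_ hden.le
  linear_combination (one_sub_mul_cos_pos hr x).le - sin_sq_add_cos_sq x

lemma hasDerivAt_sub_two_mul_phase (hr : |r| < 1) (x : ℝ) :
    HasDerivAt (fun x => x - 2 * phase r x)
      ((1 - 4 * r * cos x + 3 * r ^ 2) / ((cos x - r) ^ 2 + sin x ^ 2)) x := by
  refine ((hasDerivAt_id' x).sub ((hasDerivAt_phase hr x).const_mul 2)).congr_deriv ?_
  field_simp [(cos_sub_sq_add_sin_sq_pos hr x).ne']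
  linear_combination sin_sq_add_cos_sq x

lemma exists_polar_cos_sub_add_sin (hr : |r| < 1) (x : ℝ) :
    ∃ ρ > 0, cos x - r = ρ * cos (x + phase r x) ∧ sin x = ρ * sin (x + phase r x) := by
  set φ := phase r x
  have hcos : 0 < cos φ := cos_arctan_pos _
  have hu := one_sub_mul_cos_pos hr x
  set ρ := (1 - r * cos x) / cos φ
  have hρcos : ρ * cos φ = 1 - r * cos x := div_mul_cancel₀ _ hcos.ne'
  have hρsin : ρ * sin φ = r * sin x := by
    have htan : sin φ / cos φ = r * sin x / (1 - r * cos x) :=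
      (tan_eq_sin_div_cos φ).symm.trans (tan_arctan _)
    simp only [ρ]
    field_simp at htan ⊢
    linear_combination htan
  refine ⟨ρ, div_pos hu hcos, ?_, ?_⟩
  · rw [cos_add]
    linear_combination (-cos x) * hρcos + sin x * hρsin + r * sin_sq_add_cos_sq x
  · rw [sin_add]
    linear_combination (-sin x) * hρcos - cos x * hρsin

lemma arg_cos_sub_add_sin_mul_I (hr : |r| < 1) (x : ℝ) :
    Complex.arg ((cos x - r : ℝ) + (sin x : ℝ) * Complex.I) =
      x + phase r x - 2 * π * ⌈(x + phase r x - π) / (2 * π)⌉ := by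
  obtain ⟨ρ, hρ, hre, him⟩ := exists_polar_cos_sub_add_sin hr x
  have hpolar : ((cos x - r : ℝ) + (sin x : ℝ) * Complex.I : ℂ) =
      ρ * (Complex.cos (x + phase r x : ℝ) + Complex.sin (x + phase r x : ℝ) * Complex.I) := by
    rw [hre, him, ← Complex.ofReal_cos, ← Complex.ofReal_sin]
    push_cast
    ring
  have hwind := Complex.arg_mul_cos_add_sin_mul_I_sub hρ (x + phase r x)
  rw [show (π - (x + phase r x)) / (2 * π) = -((x + phase r x - π) / (2 * π)) by ring,
    Int.floor_neg, Int.cast_neg] at hwind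
  rw [hpolar]
  linarith

lemma Rt_eq (hr : |r| < 1) (Ω x : ℝ) :
    Rt r Ω x = x - 2 * phase r x + Ω + 4 * π * ⌈(x + phase r x - π) / (2 * π)⌉ := by
  rw [Rt, iota, arg_cos_sub_add_sin_mul_I hr]
  ring

lemma one_sub_four_mul_cos_add_three_mul_sq_nonneg (hr : |r| ≤ 1 / 3) (x : ℝ) :
    0 ≤ 1 - 4 * r * cos x + 3 * r ^ 2 := by
  nlinarith [mul_cos_le_abs r x, sq_abs r, abs_nonneg r]

lemma one_sub_four_mul_cos_add_three_mul_sq_eq_zero_iff (hr0 : 0 ≤ r) (hr1 : r ≤ 1 / 3) (x : ℝ) :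
    1 - 4 * r * cos x + 3 * r ^ 2 = 0 ↔ r = 1 / 3 ∧ cos x = 1 := by
  refine ⟨fun h => ?_, fun ⟨hr, hx⟩ => by rw [hr, hx]; norm_num⟩
  have hsplit : 1 - 4 * r * cos x + 3 * r ^ 2 = (1 - r) * (1 - 3 * r) + 4 * r * (1 - cos x) := by
    ring
  have h1 : 0 ≤ (1 - r) * (1 - 3 * r) := mul_nonneg (by linarith) (by linarith)
  have h2 : 0 ≤ 4 * r * (1 - cos x) := mul_nonneg (by linarith) (by linarith [cos_le_one x])
  have hr : r = 1 / 3 := by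
    rcases mul_eq_zero.1 (by linarith : (1 - r) * (1 - 3 * r) = 0) with h | h <;> linarith
  subst hr
  exact ⟨rfl, by linarith⟩

end OffCenter

theorem stmt_3 (r : ℝ) (hr0 : 0 ≤ r) (hr1 : r ≤ 1 / 3) (Ω : ℝ) :
    (∀ x : ℝ,
      0 ≤ (1 - 4 * r * Real.cos x + 3 * r ^ 2) /
          ((Real.cos x - r) ^ 2 + (Real.sin x) ^ 2) ∧
      ((1 - 4 * r * Real.cos x + 3 * r ^ 2) /
          ((Real.cos x - r) ^ 2 + (Real.sin x) ^ 2) = 0 →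
        r = 1 / 3 ∧ Real.cos x = 1)) ∧
    Monotone (Rt r Ω) := by
  have hr : |r| < 1 := abs_lt.2 ⟨by linarith, by linarith⟩
  have hderiv_nonneg (x : ℝ) :
      0 ≤ (1 - 4 * r * cos x + 3 * r ^ 2) / ((cos x - r) ^ 2 + sin x ^ 2) :=
    div_nonneg (one_sub_four_mul_cos_add_three_mul_sq_nonneg (abs_le.2 ⟨by linarith, hr1⟩) x)
      (cos_sub_sq_add_sin_sq_pos hr x).le
  refine ⟨fun x => ⟨hderiv_nonneg x, fun h => ?_⟩, ?_⟩
  · exact (one_sub_four_mul_cos_add_three_mul_sq_eq_zero_iff hr0 hr1 x).1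
      ((div_eq_zero_iff.1 h).resolve_right (cos_sub_sq_add_sin_sq_pos hr x).ne')
  · have hwinding : Monotone fun x => (⌈(x + phase r x - π) / (2 * π)⌉ : ℝ) :=
      fun a b hab => by
        have := monotone_add_phase hr hab
        dsimp only at this ⊢
        gcongr
    rw [funext (Rt_eq hr Ω)]
    exact ((monotone_of_hasDerivAt_nonneg (hasDerivAt_sub_two_mul_phase hr) hderiv_nonneg).add_const
      Ω).add (hwinding.const_mul (by positivity))
end

section
/- For 1/2 < r < 1, let c₁ = arccos(1/(2r)) ∈ (0, π/2). Then ι(c₁) = c₁, so {e^{ic₁}, e^{−ic₁}} is a symmetric 2-cycle of R_{r,0} (i.e. R̃_{r,0}(c₁) ≡ −c₁ mod 2π and R̃_{r,0}(−c₁) ≡ c₁ mod 2π), and R̃_{r,0}'(c₁)·R̃_{r,0}'(−c₁) = ((1 − 3r²)/r²)², which is < 1 if and only if 1/2 < r < 1/√2. -/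
open Real

lemma arg_eq_theta {a b ρ θ : ℝ} (hρ : 0 < ρ) (hθ : θ ∈ Set.Ioc (-π) π)
    (h1 : a = ρ * Real.cos θ) (h2 : b = ρ * Real.sin θ) :
    Complex.arg ((a : ℂ) + (b : ℝ) * Complex.I) = θ := by
  have key : (a : ℂ) + (b : ℝ) * Complex.I =
      ((ρ : ℝ) : ℂ) * (Complex.cos θ + Complex.sin θ * Complex.I) := by
    rw [show (Complex.cos θ) = ((Real.cos θ : ℝ) : ℂ) by rw [Complex.ofReal_cos],
        show (Complex.sin θ) = ((Real.sin θ : ℝ) : ℂ) by rw [Complex.ofReal_sin],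
        h1, h2]
    push_cast
    ring
  rw [key, Complex.arg_real_mul _ hρ, Complex.arg_cos_add_sin_mul_I hθ]

lemma arg_im_pos' (a b : ℝ) (hb : 0 < b) :
    Complex.arg ((a : ℂ) + (b : ℝ) * Complex.I) = π / 2 - Real.arctan (a / b) := by
  set t := Real.arctan (a / b) with ht
  have ht1 : t < π / 2 := Real.arctan_lt_pi_div_two _
  have ht2 : -(π / 2) < t := Real.neg_pi_div_two_lt_arctan _
  have hc : 0 < Real.cos t := Real.cos_pos_of_mem_Ioo ⟨ht2, ht1⟩
  have htan : Real.tan t = a / b := Real.tan_arctan _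
  rw [Real.tan_eq_sin_div_cos] at htan
  refine arg_eq_theta (div_pos hb hc) ⟨by linarith [Real.pi_pos], by linarith [Real.pi_pos]⟩ ?_ ?_
  · rw [Real.cos_pi_div_two_sub]
    field_simp at htan ⊢
    linarith [htan]
  · rw [Real.sin_pi_div_two_sub]
    field_simp

lemma arg_im_neg' (a b : ℝ) (hb : b < 0) :
    Complex.arg ((a : ℂ) + (b : ℝ) * Complex.I) = -(π / 2) - Real.arctan (a / b) := by
  set t := Real.arctan (a / b) with ht
  have ht1 : t < π / 2 := Real.arctan_lt_pi_div_two _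
  have ht2 : -(π / 2) < t := Real.neg_pi_div_two_lt_arctan _
  have hc : 0 < Real.cos t := Real.cos_pos_of_mem_Ioo ⟨ht2, ht1⟩
  have htan : Real.tan t = a / b := Real.tan_arctan _
  rw [Real.tan_eq_sin_div_cos] at htan
  have hcth : Real.cos (-(π / 2) - t) = -Real.sin t := by
    rw [show -(π / 2) - t = -(π / 2 + t) by ring, Real.cos_neg, Real.cos_add]
    simp
  have hsth : Real.sin (-(π / 2) - t) = -Real.cos t := by
    rw [show -(π / 2) - t = -(π / 2 + t) by ring, Real.sin_neg, Real.sin_add]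
    simp
  refine arg_eq_theta (ρ := -b / Real.cos t)
    (div_pos (by linarith) hc) ⟨by linarith [Real.pi_pos], by linarith [Real.pi_pos]⟩ ?_ ?_
  · rw [hcth]
    have hbne : b ≠ 0 := hb.ne
    field_simp [hbne] at htan ⊢
    linarith [htan]
  · rw [hsth]
    have hbne : b ≠ 0 := hb.ne
    field_simp [hbne]

lemma hasDerivAt_f (r x : ℝ) (hs : Real.sin x ≠ 0) :
    HasDerivAt (fun y => Complex.arg ((Real.cos y - r : ℝ) + (Real.sin y : ℝ) * Complex.I))
      ((1 - r * Real.cos x) / (1 - 2 * r * Real.cos x + r ^ 2)) x := by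
  have hpy := Real.sin_sq_add_cos_sq x
  have hs2 : 0 < Real.sin x ^ 2 := pow_two_pos_of_ne_zero hs
  have hD : 0 < 1 - 2 * r * Real.cos x + r ^ 2 := by nlinarith [sq_nonneg (Real.cos x - r), hs2, hpy]
  have hg : HasDerivAt (fun y => (Real.cos y - r) / Real.sin y)
      ((-Real.sin x * Real.sin x - (Real.cos x - r) * Real.cos x) / Real.sin x ^ 2) x :=
    ((Real.hasDerivAt_cos x).sub_const r).div (Real.hasDerivAt_sin x) hs
  have harct := hg.arctan
  have hval : -(1 / (1 + ((Real.cos x - r) / Real.sin x) ^ 2) *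
        ((-Real.sin x * Real.sin x - (Real.cos x - r) * Real.cos x) / Real.sin x ^ 2)) =
      (1 - r * Real.cos x) / (1 - 2 * r * Real.cos x + r ^ 2) := by
    have h1 : 1 + ((Real.cos x - r) / Real.sin x) ^ 2 =
        (1 - 2 * r * Real.cos x + r ^ 2) / Real.sin x ^ 2 := by
      field_simp
      linear_combination hpy
    have h2 : -Real.sin x * Real.sin x - (Real.cos x - r) * Real.cos x = -(1 - r * Real.cos x) := by
      linear_combination -hpy
    rw [h1, h2]
    field_simp
  rcases lt_or_gt_of_ne hs with hneg | hpos
  · have hev : ∀ᶠ y in nhds x, Real.sin y < 0 :=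
      Real.continuous_sin.continuousAt.eventually_lt continuousAt_const hneg
    have heq : (fun y => Complex.arg ((Real.cos y - r : ℝ) + (Real.sin y : ℝ) * Complex.I))
        =ᶠ[nhds x] fun y => -(π / 2) - Real.arctan ((Real.cos y - r) / Real.sin y) :=
      hev.mono fun y hy => arg_im_neg' _ _ hy
    have h2 := harct.const_sub (-(π / 2))
    rw [hval] at h2
    exact h2.congr_of_eventuallyEq heq
  · have hev : ∀ᶠ y in nhds x, 0 < Real.sin y :=
      continuousAt_const.eventually_lt Real.continuous_sin.continuousAt hpos
    have heq : (fun y => Complex.arg ((Real.cos y - r : ℝ) + (Real.sin y : ℝ) * Complex.I))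
        =ᶠ[nhds x] fun y => π / 2 - Real.arctan ((Real.cos y - r) / Real.sin y) :=
      hev.mono fun y hy => arg_im_pos' _ _ hy
    have h2 := harct.const_sub (π / 2)
    rw [hval] at h2
    exact h2.congr_of_eventuallyEq heq

lemma hasDerivAt_Rt (r x : ℝ) (hs : Real.sin x ≠ 0) :
    HasDerivAt (Rt r 0)
      (1 - 2 * ((1 - r * Real.cos x) / (1 - 2 * r * Real.cos x + r ^ 2) - 1)) x := by
  have hf := hasDerivAt_f r x hs
  exact (((hasDerivAt_id x).add_const 0).sub (((hf.sub (hasDerivAt_id x))).const_mul 2))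

theorem stmt_16 (r : ℝ) (hr0 : 1 / 2 < r) (hr1 : r < 1) :
    Real.arccos (1 / (2 * r)) ∈ Set.Ioo 0 (Real.pi / 2) ∧
    iota r (Real.arccos (1 / (2 * r))) = Real.arccos (1 / (2 * r)) ∧
    (∃ k : ℤ, Rt r 0 (Real.arccos (1 / (2 * r))) =
      -Real.arccos (1 / (2 * r)) + 2 * Real.pi * k) ∧
    (∃ k : ℤ, Rt r 0 (-Real.arccos (1 / (2 * r))) =
      Real.arccos (1 / (2 * r)) + 2 * Real.pi * k) ∧
    deriv (Rt r 0) (Real.arccos (1 / (2 * r))) *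
        deriv (Rt r 0) (-Real.arccos (1 / (2 * r))) =
      ((1 - 3 * r ^ 2) / r ^ 2) ^ 2 ∧
    (((1 - 3 * r ^ 2) / r ^ 2) ^ 2 < 1 ↔ r < 1 / Real.sqrt 2) := by
  have hrpos : (0 : ℝ) < r := by linarith
  have hrne : r ≠ 0 := hrpos.ne'
  set c := Real.arccos (1 / (2 * r)) with hc
  have hx0 : 0 < 1 / (2 * r) := by positivity
  have hx1 : 1 / (2 * r) < 1 := by
    rw [div_lt_one (by linarith)]; linarith
  have hmem : c ∈ Set.Ioo 0 (π / 2) :=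
    ⟨Real.arccos_pos.2 hx1, Real.arccos_lt_pi_div_two.2 hx0⟩
  have hcos : Real.cos c = 1 / (2 * r) := Real.cos_arccos (by linarith) hx1.le
  have hcltpi : c < π := lt_trans hmem.2 (by linarith [Real.pi_pos])
  have hsin : 0 < Real.sin c := Real.sin_pos_of_pos_of_lt_pi hmem.1 hcltpi
  -- the argument identities
  have h2c_mem : (2 * c) ∈ Set.Ioc (-π) π := by
    constructor
    · nlinarith [Real.pi_pos, hmem.1]
    · linarith [hmem.2]
  have hn2c_mem : (-(2 * c)) ∈ Set.Ioc (-π) π := by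
    constructor
    · linarith [hmem.2]
    · nlinarith [Real.pi_pos, hmem.1]
  have harg1 : Complex.arg ((Real.cos c - r : ℝ) + (Real.sin c : ℝ) * Complex.I) = 2 * c := by
    refine arg_eq_theta hrpos h2c_mem ?_ ?_
    · rw [Real.cos_two_mul, hcos]; field_simp
    · rw [Real.sin_two_mul, hcos]; field_simp
  have harg2 : Complex.arg ((Real.cos (-c) - r : ℝ) + (Real.sin (-c) : ℝ) * Complex.I)
      = -(2 * c) := by
    refine arg_eq_theta hrpos hn2c_mem ?_ ?_
    · rw [Real.cos_neg, Real.cos_neg, Real.cos_two_mul, hcos]; field_simp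
    · rw [Real.sin_neg, Real.sin_neg, Real.sin_two_mul, hcos]; field_simp
  have hiota1 : iota r c = c := by rw [iota, harg1]; ring
  have hiota2 : iota r (-c) = -c := by rw [iota, harg2]; ring
  refine ⟨hmem, hiota1, ⟨0, ?_⟩, ⟨0, ?_⟩, ?_, ?_⟩
  · rw [Rt, hiota1]; push_cast; ring
  · rw [Rt, hiota2]; push_cast; ring
  · -- derivative product
    have hd1 := (hasDerivAt_Rt r c hsin.ne').deriv
    have hsn : Real.sin (-c) ≠ 0 := by rw [Real.sin_neg]; exact neg_ne_zero.2 hsin.ne'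
    have hd2 := (hasDerivAt_Rt r (-c) hsn).deriv
    rw [hd1, hd2, Real.cos_neg, hcos]
    field_simp
    ring
  · -- the iff
    have hs2 : (0 : ℝ) < Real.sqrt 2 := Real.sqrt_pos.2 (by norm_num)
    have hsq : 1 / Real.sqrt 2 = Real.sqrt (1 / 2) := by
      rw [one_div, one_div, Real.sqrt_inv]
    rw [hsq, lt_sqrt hrpos.le]
    rw [div_pow, div_lt_one (by positivity)]
    constructor
    · intro h
      nlinarith [h, hr0, hrpos]
    · intro h
      have h1 : (0:ℝ) < 4 * r ^ 2 - 1 := by nlinarith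
      have h2 : (0:ℝ) < 1 - 2 * r ^ 2 := by linarith
      nlinarith [mul_pos h1 h2]
end

section
/- For 0 < r < 1, let c₂ ∈ (π/2, π) satisfy cos c₂ = (1 − √(1 + 8r²))/(4r). Then 2r·cos²c₂ − cos c₂ − r = 0, and {e^{ic₂}, e^{−ic₂}} is a symmetric 2-cycle of R_{r,π}, with R̃_{r,π}'(c₂) = 2(√(1+8r²) + 3r²)/(1 + √(1+8r²) + 2r²) > 1, so the cycle is repelling. -/
set_option maxHeartbeats 1000000

open Real

theorem stmt_17 (r : ℝ) (hr0 : 0 < r) (hr1 : r < 1)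
    (c : ℝ) (hc : c ∈ Set.Ioo (Real.pi / 2) Real.pi)
    (hcos : Real.cos c = (1 - Real.sqrt (1 + 8 * r ^ 2)) / (4 * r)) :
    2 * r * Real.cos c ^ 2 - Real.cos c - r = 0 ∧
    (∃ k : ℤ, Rt r Real.pi c = -c + 2 * Real.pi * k) ∧
    (∃ k : ℤ, Rt r Real.pi (-c) = c + 2 * Real.pi * k) ∧
    deriv (Rt r Real.pi) c =
      2 * (Real.sqrt (1 + 8 * r ^ 2) + 3 * r ^ 2) /
        (1 + Real.sqrt (1 + 8 * r ^ 2) + 2 * r ^ 2) ∧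
    1 < deriv (Rt r Real.pi) c := by
  obtain ⟨hc1, hc2⟩ := hc
  have hpi := Real.pi_pos
  set s := Real.sqrt (1 + 8 * r ^ 2) with hs
  have hs2 : s ^ 2 = 1 + 8 * r ^ 2 := Real.sq_sqrt (by positivity)
  have hs1 : 1 < s := by
    nlinarith [Real.sqrt_nonneg (1 + 8 * r ^ 2)]
  -- part 1
  have h1 : 2 * r * Real.cos c ^ 2 - Real.cos c - r = 0 := by
    rw [hcos]; field_simp; nlinarith
  -- basic bounds on cos c
  have hcneg : Real.cos c < 0 := by
    rw [hcos]
    apply div_neg_of_neg_of_pos <;> nlinarith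
  have hcge : -(1/2) < Real.cos c := by
    rw [hcos]
    rw [lt_div_iff₀ (by positivity)]
    nlinarith
  have hsin : 0 < Real.sin c := Real.sin_pos_of_pos_of_lt_pi (by linarith) hc2
  have hD : 0 < 1 - 2 * Real.cos c ^ 2 := by nlinarith [Real.cos_le_one c]
  have hc34 : c < 3 * Real.pi / 4 := by
    by_contra h
    push_neg at h
    have hmono : Real.cos c ≤ Real.cos (3 * Real.pi / 4) :=
      Real.cos_le_cos_of_nonneg_of_le_pi (by positivity) hc2.le h
    have h34 : Real.cos (3 * Real.pi / 4) = -(Real.sqrt 2 / 2) := by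
      have h' : (3 : ℝ) * Real.pi / 4 = Real.pi - Real.pi / 4 := by ring
      rw [h', Real.cos_pi_sub, Real.cos_pi_div_four]
    rw [h34] at hmono
    nlinarith [Real.sq_sqrt (by norm_num : (0:ℝ) ≤ 2), Real.sqrt_nonneg 2]
  -- the argument computation: arg (cos c - r + sin c * I) = 2c - π/2
  have harg : Complex.arg ((Real.cos c - r : ℝ) + (Real.sin c : ℝ) * Complex.I)
      = 2 * c - Real.pi / 2 := by
    have hcosθ : Real.cos (2 * c - Real.pi / 2) = 2 * Real.sin c * Real.cos c := by
      rw [Real.cos_sub, Real.cos_pi_div_two, Real.sin_pi_div_two, Real.sin_two_mul]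
      ring
    have hsinθ : Real.sin (2 * c - Real.pi / 2) = 1 - 2 * Real.cos c ^ 2 := by
      rw [Real.sin_sub, Real.cos_pi_div_two, Real.sin_pi_div_two, Real.cos_two_mul]
      ring
    have hρpos : 0 < Real.sin c / (1 - 2 * Real.cos c ^ 2) := div_pos hsin hD
    have key : ((Real.cos c - r : ℝ) + (Real.sin c : ℝ) * Complex.I)
        = (Real.sin c / (1 - 2 * Real.cos c ^ 2) : ℝ) *
          ((Real.cos (2 * c - Real.pi / 2) : ℝ) + (Real.sin (2 * c - Real.pi / 2) : ℝ) * Complex.I) := by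
      have hre : Real.cos c - r
          = Real.sin c / (1 - 2 * Real.cos c ^ 2) * Real.cos (2 * c - Real.pi / 2) := by
        rw [hcosθ]
        rw [div_mul_eq_mul_div, eq_div_iff hD.ne']
        have hs2c := Real.sin_sq_add_cos_sq c
        nlinarith
      apply Complex.ext
      · simp only [Complex.add_re, Complex.ofReal_re, Complex.ofReal_im, Complex.mul_re,
          Complex.mul_im, Complex.add_im, Complex.I_re, Complex.I_im, mul_zero, mul_one,
          zero_mul, sub_zero, zero_add, add_zero, zero_sub]
        rw [hre]
      · simp only [Complex.add_re, Complex.ofReal_re, Complex.ofReal_im, Complex.mul_re,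
          Complex.mul_im, Complex.add_im, Complex.I_re, Complex.I_im, mul_zero, mul_one,
          zero_mul, sub_zero, zero_add, add_zero, zero_sub]
        rw [hsinθ, div_mul_cancel₀ _ hD.ne']
    rw [key, Complex.arg_real_mul _ hρpos, Complex.ofReal_cos, Complex.ofReal_sin]
    exact Complex.arg_cos_add_sin_mul_I ⟨by linarith, by linarith⟩
  have hiota_c : iota r c = c - Real.pi / 2 := by
    rw [iota, harg]; ring
  -- iota at -c, via conjugation
  have hiota_nc : iota r (-c) = -c + Real.pi / 2 := by
    have hconj : ((Real.cos (-c) - r : ℝ) + (Real.sin (-c) : ℝ) * Complex.I)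
        = (starRingEnd ℂ) ((Real.cos c - r : ℝ) + (Real.sin c : ℝ) * Complex.I) := by
      rw [Real.cos_neg, Real.sin_neg]
      simp [Complex.ext_iff, -Complex.ofReal_cos, -Complex.ofReal_sin]
    have hne : Complex.arg ((Real.cos c - r : ℝ) + (Real.sin c : ℝ) * Complex.I)
        ≠ Real.pi := by
      rw [harg]
      intro h
      linarith
    rw [iota, hconj, Complex.arg_conj, if_neg hne, harg]
    ring
  refine ⟨h1, ⟨1, ?_⟩, ⟨0, ?_⟩, ?_⟩
  · rw [Rt, hiota_c]; push_cast; ring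
  · rw [Rt, hiota_nc]; push_cast; ring
  -- derivative
  have hDpos : 0 < 1 - 2 * r * Real.cos c + r ^ 2 := by
    nlinarith [Real.cos_le_one c, Real.neg_one_le_cos c]
  have hfc : HasDerivAt (fun x : ℝ => ((Real.cos x - r : ℝ) : ℂ) + (Real.sin x : ℝ) * Complex.I)
      (((-Real.sin c : ℝ) : ℂ) + ((Real.cos c : ℝ) : ℂ) * Complex.I) c := by
    have ha : HasDerivAt (fun x : ℝ => ((Real.cos x - r : ℝ) : ℂ)) ((-Real.sin c : ℝ) : ℂ) c := by
      exact_mod_cast ((Real.hasDerivAt_cos c).sub_const r).ofReal_comp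
    have hb : HasDerivAt (fun x : ℝ => ((Real.sin x : ℝ) : ℂ) * Complex.I)
        (((Real.cos c : ℝ) : ℂ) * Complex.I) c :=
      (Real.hasDerivAt_sin c).ofReal_comp.mul_const Complex.I
    exact ha.add hb
  have hmem : (((Real.cos c - r : ℝ) : ℂ) + (Real.sin c : ℝ) * Complex.I) ∈ Complex.slitPlane := by
    refine Or.inr ?_
    simp only [Complex.add_im, Complex.ofReal_im, Complex.mul_im, Complex.ofReal_re,
      Complex.I_re, Complex.I_im, mul_zero, mul_one, zero_add, add_zero, zero_mul]
    exact hsin.ne'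
  have hlog := hfc.clog_real hmem
  have him := Complex.imCLM.hasFDerivAt.comp_hasDerivAt c hlog
  -- value of the derivative of im ∘ log ∘ f
  have hval : Complex.imCLM ((((-Real.sin c : ℝ) : ℂ) + ((Real.cos c : ℝ) : ℂ) * Complex.I) /
      (((Real.cos c - r : ℝ) : ℂ) + (Real.sin c : ℝ) * Complex.I))
      = (1 - r * Real.cos c) / (1 - 2 * r * Real.cos c + r ^ 2) := by
    rw [Complex.imCLM_apply, Complex.div_im]
    have hnsq : Complex.normSq (((Real.cos c - r : ℝ) : ℂ) + (Real.sin c : ℝ) * Complex.I)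
        = 1 - 2 * r * Real.cos c + r ^ 2 := by
      simp only [Complex.normSq_apply, Complex.add_re, Complex.add_im, Complex.ofReal_re,
        Complex.ofReal_im, Complex.mul_re, Complex.mul_im, Complex.I_re, Complex.I_im,
        mul_zero, mul_one, zero_mul, sub_zero, zero_add, add_zero]
      nlinarith [Real.sin_sq_add_cos_sq c]
    rw [hnsq]
    simp only [Complex.add_re, Complex.add_im, Complex.ofReal_re, Complex.ofReal_im,
      Complex.mul_re, Complex.mul_im, Complex.I_re, Complex.I_im,
      mul_zero, mul_one, zero_mul, sub_zero, zero_add, add_zero]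
    rw [div_sub_div_same]
    congr 1
    nlinarith [Real.sin_sq_add_cos_sq c]
  have hiota_deriv : HasDerivAt (iota r)
      ((1 - r * Real.cos c) / (1 - 2 * r * Real.cos c + r ^ 2) - 1) c := by
    have heq : iota r = fun x : ℝ =>
        (Complex.log (((Real.cos x - r : ℝ) : ℂ) + (Real.sin x : ℝ) * Complex.I)).im - x := by
      funext x
      rw [iota, Complex.log_im]
    rw [heq]
    have := him.sub (hasDerivAt_id c)
    rwa [hval] at this
  have hRt : HasDerivAt (Rt r Real.pi)
      (1 - 2 * ((1 - r * Real.cos c) / (1 - 2 * r * Real.cos c + r ^ 2) - 1)) c := by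
    have heq : Rt r Real.pi = fun x : ℝ => x + Real.pi - 2 * iota r x := rfl
    rw [heq]
    exact (((hasDerivAt_id c).add_const Real.pi).sub (hiota_deriv.const_mul 2))
  have hderiv := hRt.deriv
  rw [hderiv]
  have hE : (0:ℝ) < 1 + s + 2 * r ^ 2 := by nlinarith
  have hNval : 1 - r * Real.cos c = (3 + s) / 4 := by
    rw [hcos]; field_simp; ring
  have hDval : 1 - 2 * r * Real.cos c + r ^ 2 = (1 + s + 2 * r ^ 2) / 2 := by
    rw [hcos]; field_simp; ring
  have hfin : 1 - 2 * ((1 - r * Real.cos c) / (1 - 2 * r * Real.cos c + r ^ 2) - 1)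
      = 2 * (s + 3 * r ^ 2) / (1 + s + 2 * r ^ 2) := by
    rw [hNval, hDval]
    field_simp
    ring
  constructor
  · rw [hfin]
  · rw [hfin, lt_div_iff₀ hE]
    nlinarith
end

section
/- For 0 < r < 1, the off-center reflection with Ω = π is given on the unit circle by the Blaschke-type product R(z) = −z²(1 − rz)/(z − r); that is, for all x ∈ ℝ, R(e^{ix}) = e^{iR̃_{r,π}(x)} where R̃_{r,π}(x) = x + π − 2ι(x) and ι(x) = Arg(cos x − r + i·sin x) − x. In particular |R(z)| = 1 whenever |z| = 1. -/
/-!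
On the unit circle `conj z = z⁻¹`, so `1 - r z = z * conj (z - r)` and
`R(z) = -z³ * conj w / w` with `w = z - r`. Since `conj w / w = exp (-2 i arg w)`, this gives
`R(e^{ix}) = exp (i (3x + π - 2 arg w))`, and `3x + π - 2 arg w` is `R̃_{r,π}(x)` because
`ι(x) = arg w - x`. The norm statement follows by writing a unimodular `z` as `exp (i arg z)`.
-/

open Real

namespace Complex

open ComplexConjugate

lemma one_sub_conj_mul_eq_mul_conj_sub {z : ℂ} (hz : ‖z‖ = 1) (c : ℂ) :
    1 - conj c * z = z * conj (z - c) := by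
  have hzz : z * conj z = 1 := by rw [mul_conj, normSq_eq_norm_sq, hz]; norm_num
  rw [map_sub]
  linear_combination -hzz

lemma conj_div_self_eq_exp {w : ℂ} (hw : w ≠ 0) : conj w / w = exp (-2 * arg w * I) := by
  have hpolar := norm_mul_exp_arg_mul_I w
  set a := arg w
  set ρ := ‖w‖
  rw [div_eq_iff hw, ← hpolar, map_mul, ← exp_conj, conj_ofReal, map_mul, conj_ofReal, conj_I,
    mul_left_comm, ← exp_add]
  ring_nf

lemma exp_I_mul_ofReal_sub_ne_zero {c : ℂ} (hc : ‖c‖ ≠ 1) (x : ℝ) : exp (I * x) - c ≠ 0 :=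
  sub_ne_zero.2 fun h => hc (h ▸ norm_exp_I_mul_ofReal x)

lemma eq_exp_I_mul_arg {z : ℂ} (hz : ‖z‖ = 1) : z = exp (I * arg z) := by
  simpa [hz, mul_comm] using (norm_mul_exp_arg_mul_I z).symm

end Complex

open Complex ComplexConjugate

noncomputable def offCenterReflection (r : ℝ) (z : ℂ) : ℂ :=
  -z ^ 2 * (1 - (r : ℂ) * z) / (z - (r : ℂ))

lemma iota_eq (r x : ℝ) : iota r x = arg (exp (I * x) - r) - x := by
  rw [iota, mul_comm I (x : ℂ), exp_mul_I]
  push_cast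
  ring_nf

lemma Rt_pi_eq (r x : ℝ) : Rt r π x = 3 * x + π - 2 * arg (exp (I * x) - r) := by
  rw [Rt, iota_eq]
  ring

lemma offCenterReflection_exp_I_mul {r : ℝ} (hr : |r| ≠ 1) (x : ℝ) :
    offCenterReflection r (exp (I * x)) = exp (I * (Rt r π x : ℝ)) := by
  set z := exp (I * x) with hz
  have hw : z - r ≠ 0 := exp_I_mul_ofReal_sub_ne_zero (by simpa using hr) x
  have hnum : 1 - (r : ℂ) * z = z * conj (z - r) := by
    simpa using one_sub_conj_mul_eq_mul_conj_sub (norm_exp_I_mul_ofReal x) r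
  calc offCenterReflection r z = -z ^ 3 * (conj (z - r) / (z - r)) := by
        rw [offCenterReflection, hnum]
        ring
    _ = exp (π * I + 3 * (I * x) + -2 * arg (z - r) * I) := by
        rw [conj_div_self_eq_exp hw, Complex.exp_add, Complex.exp_add, exp_pi_mul_I,
          show (3 : ℂ) * (I * x) = (3 : ℕ) * (I * x) by norm_num, Complex.exp_nat_mul]
        ring
    _ = exp (I * (Rt r π x : ℝ)) := by
        rw [Rt_pi_eq, ← hz]
        push_cast
        ring_nf

lemma norm_offCenterReflection {r : ℝ} (hr : |r| ≠ 1) {z : ℂ} (hz : ‖z‖ = 1) :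
    ‖offCenterReflection r z‖ = 1 := by
  rw [eq_exp_I_mul_arg hz, offCenterReflection_exp_I_mul hr, norm_exp_I_mul_ofReal]

theorem stmt_19 (r : ℝ) (hr0 : 0 < r) (hr1 : r < 1) :
    (∀ x : ℝ,
      -(Complex.exp (Complex.I * x)) ^ 2 *
          (1 - (r : ℂ) * Complex.exp (Complex.I * x)) /
          (Complex.exp (Complex.I * x) - (r : ℂ)) =
        Complex.exp (Complex.I * (Rt r Real.pi x : ℝ))) ∧
    (∀ z : ℂ, ‖z‖ = 1 →
      ‖-z ^ 2 * (1 - (r : ℂ) * z) / (z - (r : ℂ))‖ = 1) := by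
  have hr : |r| ≠ 1 := by
    rw [abs_of_pos hr0]
    exact hr1.ne
  exact ⟨offCenterReflection_exp_I_mul hr, fun _ => norm_offCenterReflection hr⟩
end
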